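/- arXiv:1610.05466 — 2 statements merged into one kernel-verified Lean document; each statement's English description precedes it below -/
import Mathlib

section
/- If G is a partial cube and H is an expansion of G with respect to isometric subgraphs G¹ and G² covering G with non-empty intersection, then H is a partial cube. -/
open SimpleGraph

/-- The hypercube graph `Q_d` on `{0,1}^d`: two vertices are adjacent iff they
differ in exactly one coordinate. -/
def hypercubeGraph (d : ℕ) : SimpleGraph (Fin d → Bool) where
  Adj x y := hammingDist x y = 1
  symm := by
    constructor
    intro x y h
    rwa [hammingDist_comm]
  loopless := by
    constructor
    intro x h
    simp [hammingDist_self] at h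

/-- A partial cube: a connected simple graph admitting an isometric embedding
into some hypercube. -/
def IsPartialCube {V : Type} (G : SimpleGraph V) : Prop :=
  G.Connected ∧
    ∃ (d : ℕ) (φ : V → (Fin d → Bool)), Function.Injective φ ∧
      ∀ v w : V, (hypercubeGraph d).dist (φ v) (φ w) = G.dist v w

/-- A subgraph is isometric if distances within it coincide with distances in
the ambient graph. -/
def IsIsometricSubgraph {V : Type} {G : SimpleGraph V} (G' : G.Subgraph) : Prop :=
  ∀ u v : G'.verts, G'.coe.dist u v = G.dist u.val v.val

/-- The expansion graph of `G` with respect to two subgraphs `G₁, G₂`: take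
disjoint copies of `G₁` and `G₂` and join the two copies of each vertex of
`G₁ ∩ G₂` by a matching edge. -/
def expansionGraph {V : Type} {G : SimpleGraph V} (G₁ G₂ : G.Subgraph) :
    SimpleGraph (↥G₁.verts ⊕ ↥G₂.verts) where
  Adj a b :=
    match a, b with
    | Sum.inl u, Sum.inl v => G₁.Adj u v
    | Sum.inr u, Sum.inr v => G₂.Adj u v
    | Sum.inl u, Sum.inr v => (u : V) = (v : V)
    | Sum.inr u, Sum.inl v => (u : V) = (v : V)
  symm := by
    constructor
    rintro (u | u) (v | v) h
    · exact G₁.symm.symm _ _ h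
    · exact h.symm
    · exact h.symm
    · exact G₂.symm.symm _ _ h
  loopless := by
    constructor
    rintro (u | u) h
    · exact G.loopless.irrefl _ (G₁.adj_sub h)
    · exact G.loopless.irrefl _ (G₂.adj_sub h)

/-- `H` is the expansion of `G` with respect to the subgraphs `G₁` and `G₂`:
they are isometric, cover `G` (vertices and edges), have non-empty
intersection, and `H` is isomorphic to the resulting expansion graph. -/
structure IsExpansionWrt {V W : Type} (H : SimpleGraph W) (G : SimpleGraph V)
    (G₁ G₂ : G.Subgraph) : Prop where
  isometric₁ : IsIsometricSubgraph G₁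
  isometric₂ : IsIsometricSubgraph G₂
  covers : G₁ ⊔ G₂ = ⊤
  inter_nonempty : (G₁.verts ∩ G₂.verts).Nonempty
  iso : Nonempty (H ≃g expansionGraph G₁ G₂)

/-- `H` is an expansion of `G` (with respect to some admissible pair of
subgraphs). -/
def IsExpansionOf {V W : Type} (H : SimpleGraph W) (G : SimpleGraph V) : Prop :=
  ∃ G₁ G₂ : G.Subgraph, IsExpansionWrt H G G₁ G₂

/-!
Send the copy of `v` on side `i` of the expansion to `(φ v, i) ∈ Q_{d+1}`, where `φ` embeds `G`.
This is a graph homomorphism, so it does not increase distances. Conversely, two copies are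
joined by a walk of length `dist_G + [sides differ]`: within a side this is the isometry of
`G¹` or `G²`, and across sides a geodesic of `G` meets `G¹ ∩ G²` (every edge of `G` lies in
`G¹` or `G²`), where a matching edge switches sides. Both bounds match the Hamming distance.
-/

namespace hypercubeGraph

variable {d : ℕ}

lemma hammingDist_le_length {x y : Fin d → Bool} (p : (hypercubeGraph d).Walk x y) :
    hammingDist x y ≤ p.length := by
  induction p with
  | nil => simp
  | @cons u v w h q ih =>
    have huv : hammingDist u v = 1 := h
    have := hammingDist_triangle u v w
    rw [Walk.length_cons]
    omega

lemma exists_adj_hammingDist_add_one_eq {x y : Fin d → Bool} (hxy : x ≠ y) :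
    ∃ z, (hypercubeGraph d).Adj x z ∧ hammingDist z y + 1 = hammingDist x y := by
  obtain ⟨i, hi⟩ := Function.ne_iff.mp hxy
  refine ⟨Function.update x i (y i), ?_, ?_⟩
  · show hammingDist _ _ = 1
    have : (Finset.univ.filter fun j => x j ≠ Function.update x i (y i) j) = {i} := by
      ext j
      by_cases hj : j = i <;> simp [Function.update_apply, hj, hi]
    rw [hammingDist, this, Finset.card_singleton]
  · have hmem : i ∈ Finset.univ.filter fun j => x j ≠ y j := by simp [hi]
    have : (Finset.univ.filter fun j => Function.update x i (y i) j ≠ y j) =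
        (Finset.univ.filter fun j => x j ≠ y j).erase i := by
      ext j
      by_cases hj : j = i <;> simp [Function.update_apply, hj]
    rw [hammingDist, hammingDist, this, Finset.card_erase_add_one hmem]

lemma exists_walk_length_eq_hammingDist (x y : Fin d → Bool) :
    ∃ p : (hypercubeGraph d).Walk x y, p.length = hammingDist x y := by
  induction h : hammingDist x y generalizing x with
  | zero =>
    obtain rfl := hammingDist_eq_zero.mp h
    exact ⟨.nil, rfl⟩
  | succ n ih =>
    obtain ⟨z, hxz, hzy⟩ := exists_adj_hammingDist_add_one_eq 
      (hammingDist_ne_zero.mp (by rw [h]; exact n.succ_ne_zero))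
    obtain ⟨p, hp⟩ := ih z (by omega)
    exact ⟨.cons hxz p, by rw [Walk.length_cons, hp]⟩

lemma dist_eq_hammingDist (x y : Fin d → Bool) :
    (hypercubeGraph d).dist x y = hammingDist x y := by
  obtain ⟨p, hp⟩ := exists_walk_length_eq_hammingDist x y
  obtain ⟨q, hq⟩ := p.reachable.exists_walk_length_eq_dist
  exact le_antisymm (hp ▸ dist_le p) (hq ▸ hammingDist_le_length q)

end hypercubeGraph

lemma hammingDist_snoc {d : ℕ} (x y : Fin d → Bool) (b c : Bool) :
    hammingDist (Fin.snoc x b : Fin (d + 1) → Bool) (Fin.snoc y c) =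
      hammingDist x y + if b = c then 0 else 1 := by
  unfold hammingDist
  rw [Finset.card_filter, Finset.card_filter, Fin.sum_univ_castSucc]
  by_cases hbc : b = c <;> simp [hbc]

lemma SimpleGraph.Reachable.dist_map_le {V V' : Type*} {G : SimpleGraph V}
    {G' : SimpleGraph V'} {u v : V} (h : G.Reachable u v) (f : G →g G') :
    G'.dist (f u) (f v) ≤ G.dist u v := by
  obtain ⟨p, hp⟩ := h.exists_walk_length_eq_dist
  exact hp ▸ (p.length_map f) ▸ dist_le (p.map f)

lemma isPartialCube_iff_exists_hom {W : Type} {H : SimpleGraph W} :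
    IsPartialCube H ↔ H.Connected ∧ ∃ (d : ℕ) (f : H →g hypercubeGraph d),
      ∀ a b, H.dist a b ≤ hammingDist (f a) (f b) := by
  simp_rw [IsPartialCube, hypercubeGraph.dist_eq_hammingDist]
  refine and_congr_right fun hconn => ⟨?_, ?_⟩
  · rintro ⟨d, φ, -, hφ⟩
    refine ⟨d, ⟨φ, fun {a b} hab => ?_⟩, fun a b => (hφ a b).ge⟩
    rw [← dist_eq_one_iff_adj, hypercubeGraph.dist_eq_hammingDist, hφ,
      dist_eq_one_iff_adj]
    exact hab
  · rintro ⟨d, f, hf⟩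
    have hdist : ∀ a b, hammingDist (f a) (f b) = H.dist a b := fun a b =>
      le_antisymm (hypercubeGraph.dist_eq_hammingDist (f a) (f b) ▸ (hconn a b).dist_map_le f)
        (hf a b)
    refine ⟨d, f, fun a b hab => ?_, hdist⟩
    rw [← hconn.dist_eq_zero_iff, ← hdist, hab, hammingDist_self]

lemma IsPartialCube.of_iso {W W' : Type} {H : SimpleGraph W} {H' : SimpleGraph W'}
    (e : H ≃g H') (h : IsPartialCube H') : IsPartialCube H := by
  rw [isPartialCube_iff_exists_hom] at h ⊢
  obtain ⟨hconn, d, f, hf⟩ := h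
  refine ⟨e.connected_iff.mpr hconn, d, f.comp e.toHom, fun a b => ?_⟩
  calc H.dist a b = H.dist (e.symm (e a)) (e.symm (e b)) := by simp
    _ ≤ H'.dist (e a) (e b) := (hconn (e a) (e b)).dist_map_le e.symm.toHom
    _ ≤ _ := hf (e a) (e b)

variable {V : Type} {G : SimpleGraph V}

lemma IsIsometricSubgraph.coe_preconnected {G' : G.Subgraph} (hG' : IsIsometricSubgraph G')
    (hG : G.Preconnected) : G'.coe.Preconnected := by
  intro u v
  by_cases huv : u = v
  · exact huv ▸ Reachable.refl u
  · refine Reachable.of_dist_ne_zero ?_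
    rw [hG']
    exact ((hG u v).pos_dist_of_ne (Subtype.coe_ne_coe.mpr huv)).ne'

lemma IsIsometricSubgraph.exists_walk_map_length_eq {V' : Type*} {K : SimpleGraph V'}
    {G' : G.Subgraph} (hG' : IsIsometricSubgraph G') (hG : G.Preconnected) (f : G'.coe →g K)
    (u v : G'.verts) : ∃ p : K.Walk (f u) (f v), p.length = G.dist u v := by
  obtain ⟨q, hq⟩ := (hG'.coe_preconnected hG u v).exists_walk_length_eq_dist
  exact ⟨q.map f, by rw [Walk.length_map, hq, hG']⟩

lemma SimpleGraph.Walk.exists_mem_support_of_sup_eq_top {G₁ G₂ : G.Subgraph}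
    (hcov : G₁ ⊔ G₂ = ⊤) {u v : V} (p : G.Walk u v) (hu : u ∈ G₁.verts) (hv : v ∈ G₂.verts) :
    ∃ w ∈ p.support, w ∈ G₁.verts ∩ G₂.verts := by
  induction p with
  | nil => exact ⟨_, Walk.start_mem_support _, hu, hv⟩
  | @cons u x v h q ih =>
    by_cases hu₂ : u ∈ G₂.verts
    · exact ⟨u, Walk.start_mem_support _, hu, hu₂⟩
    · have hadj : (G₁ ⊔ G₂).Adj u x := hcov ▸ h
      have hx : x ∈ G₁.verts :=
        (hadj.resolve_right fun h₂ => hu₂ (G₂.edge_vert h₂)).snd_mem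
      obtain ⟨w, hw, hw₁₂⟩ := ih hx hv
      exact ⟨w, by simp [hw], hw₁₂⟩

lemma SimpleGraph.Reachable.exists_mem_inter_dist_add_dist_le {G₁ G₂ : G.Subgraph}
    (hcov : G₁ ⊔ G₂ = ⊤) {u v : V} (h : G.Reachable u v) (hu : u ∈ G₁.verts)
    (hv : v ∈ G₂.verts) : ∃ w ∈ G₁.verts ∩ G₂.verts, G.dist u w + G.dist w v ≤ G.dist u v := by
  classical
  obtain ⟨p, hp⟩ := h.exists_walk_length_eq_dist
  obtain ⟨w, hw, hw₁₂⟩ := p.exists_mem_support_of_sup_eq_top hcov hu hv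
  refine ⟨w, hw₁₂, ?_⟩
  rw [← hp, ← p.take_spec hw, Walk.length_append]
  exact add_le_add (dist_le _) (dist_le _)

namespace expansionGraph

variable {G₁ G₂ : G.Subgraph}

def proj : G₁.verts ⊕ G₂.verts → V := Sum.elim Subtype.val Subtype.val

@[simp] lemma proj_inl (u : G₁.verts) : proj (G₂ := G₂) (Sum.inl u) = u := rfl

@[simp] lemma proj_inr (u : G₂.verts) : proj (G₁ := G₁) (Sum.inr u) = u := rfl

def inlHom : G₁.coe →g expansionGraph G₁ G₂ := ⟨Sum.inl, id⟩

def inrHom : G₂.coe →g expansionGraph G₁ G₂ := ⟨Sum.inr, id⟩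

section walks

variable (hG : G.Connected) (hG₁ : IsIsometricSubgraph G₁) (hG₂ : IsIsometricSubgraph G₂)
  (hcov : G₁ ⊔ G₂ = ⊤)
include hG hG₁ hG₂ hcov

lemma exists_walk_inl_inr_length_le (u : G₁.verts) (v : G₂.verts) :
    ∃ p : (expansionGraph G₁ G₂).Walk (.inl u) (.inr v), p.length ≤ G.dist u v + 1 := by
  obtain ⟨w, ⟨hw₁, hw₂⟩, hw⟩ := (hG u v).exists_mem_inter_dist_add_dist_le hcov u.2 v.2
  obtain ⟨p₁, hp₁⟩ : ∃ p : (expansionGraph G₁ G₂).Walk (.inl u) (.inl ⟨w, hw₁⟩),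
      p.length = G.dist u w := hG₁.exists_walk_map_length_eq hG.preconnected inlHom _ _
  obtain ⟨p₂, hp₂⟩ : ∃ p : (expansionGraph G₁ G₂).Walk (.inr ⟨w, hw₂⟩) (.inr v),
      p.length = G.dist w v := hG₂.exists_walk_map_length_eq hG.preconnected inrHom _ _
  have hmatch : (expansionGraph G₁ G₂).Adj (.inl ⟨w, hw₁⟩) (.inr ⟨w, hw₂⟩) := rfl
  refine ⟨p₁.append (.cons hmatch p₂), ?_⟩
  rw [Walk.length_append, Walk.length_cons, hp₁, hp₂]
  omega

lemma exists_walk_length_le (a b : G₁.verts ⊕ G₂.verts) :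
    ∃ p : (expansionGraph G₁ G₂).Walk a b,
      p.length ≤ G.dist (proj a) (proj b) + if a.isRight = b.isRight then 0 else 1 := by
  rcases a with u | u <;> rcases b with v | v <;> simp only [proj_inl, proj_inr,
    Sum.isRight_inl, Sum.isRight_inr, if_true, if_false, add_zero, Bool.false_eq_true,
    Bool.true_eq_false]
  · obtain ⟨p, hp⟩ := hG₁.exists_walk_map_length_eq hG.preconnected inlHom u v
    exact ⟨p, hp.le⟩
  · exact exists_walk_inl_inr_length_le hG hG₁ hG₂ hcov u v
  · obtain ⟨p, hp⟩ := exists_walk_inl_inr_length_le hG hG₁ hG₂ hcov v u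
    exact ⟨p.reverse, by rw [Walk.length_reverse, dist_comm]; exact hp⟩
  · obtain ⟨p, hp⟩ := hG₂.exists_walk_map_length_eq hG.preconnected inrHom u v
    exact ⟨p, hp.le⟩

end walks

def toHypercube {d : ℕ} (φ : G →g hypercubeGraph d) :
    expansionGraph G₁ G₂ →g hypercubeGraph (d + 1) where
  toFun a := Fin.snoc (φ (proj a)) a.isRight
  map_rel' {a b} hab := by
    show hammingDist _ _ = 1
    rw [hammingDist_snoc]
    rcases a with u | u <;> rcases b with v | v
    · exact φ.map_adj (G₁.adj_sub hab)
    · simp [show (u : V) = v from hab]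
    · simp [show (u : V) = v from hab]
    · exact φ.map_adj (G₂.adj_sub hab)

theorem isPartialCube (hG : IsPartialCube G) (hG₁ : IsIsometricSubgraph G₁)
    (hG₂ : IsIsometricSubgraph G₂) (hcov : G₁ ⊔ G₂ = ⊤) (hne : (G₁.verts ∩ G₂.verts).Nonempty) :
    IsPartialCube (expansionGraph G₁ G₂) := by
  rw [isPartialCube_iff_exists_hom] at hG ⊢
  obtain ⟨hconn, d, φ, hφ⟩ := hG
  have walks := exists_walk_length_le hconn hG₁ hG₂ hcov
  obtain ⟨w, hw₁, -⟩ := hne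
  refine ⟨(connected_iff _).mpr ⟨fun a b => (walks a b).elim fun p _ => p.reachable,
    ⟨.inl ⟨w, hw₁⟩⟩⟩, d + 1, toHypercube φ, fun a b => ?_⟩
  obtain ⟨p, hp⟩ := walks a b
  calc (expansionGraph G₁ G₂).dist a b
      ≤ G.dist (proj a) (proj b) + if a.isRight = b.isRight then 0 else 1 := (dist_le p).trans hp
    _ ≤ hammingDist (φ (proj a)) (φ (proj b)) + if a.isRight = b.isRight then 0 else 1 := by
      gcongr; exact hφ _ _
    _ = hammingDist (toHypercube φ a) (toHypercube φ b) := (hammingDist_snoc ..).symm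

end expansionGraph

/-- If `G` is a partial cube and `H` is an expansion of `G` with respect to
isometric subgraphs `G₁` and `G₂` covering `G` with non-empty intersection,
then `H` is a partial cube. -/
theorem isPartialCube_of_expansion {V W : Type} (G : SimpleGraph V)
    (H : SimpleGraph W) (hG : IsPartialCube G) (G₁ G₂ : G.Subgraph)
    (hexp : IsExpansionWrt H G G₁ G₂) :
    IsPartialCube H :=
  .of_iso hexp.iso.some <| expansionGraph.isPartialCube hG hexp.isometric₁ hexp.isometric₂
    hexp.covers hexp.inter_nonempty
end

section
/- In a partial cube, the Djoković–Winkler relation Θ is an equivalence relation on the edge set. -/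
open SimpleGraph

/-- The Djoković–Winkler relation `Θ` on (unordered) edges: `e = xy` and
`f = uv` are related iff `d(x,u) + d(y,v) ≠ d(x,v) + d(y,u)`. -/
def DWRel {V : Type} (G : SimpleGraph V) (e f : Sym2 V) : Prop :=
  ∃ x y u v : V, e = s(x, y) ∧ f = s(u, v) ∧
    G.dist x u + G.dist y v ≠ G.dist x v + G.dist y u

/-!
Under an isometric embedding `φ` into a hypercube, graph distance becomes Hamming distance,
so the endpoints of an edge `xy` differ in exactly one coordinate `i`. The defect
`d(x,u) + d(y,v) - d(x,v) - d(y,u)` is a sum of coordinatewise contributions, and off `i`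
these vanish; hence `xy Θ uv` iff `uv` also flips coordinate `i`. Thus on edges `Θ` is the
kernel of the map sending an edge to the coordinate it flips, and so an equivalence.
-/

section Hamming

variable {ι : Type*} [Fintype ι] {β : ι → Type*} [∀ i, DecidableEq (β i)]

theorem hammingDist_eq_one_iff {a b : ∀ i, β i} :
    hammingDist a b = 1 ↔ ∃ i, ∀ k, a k ≠ b k ↔ k = i := by
  simp only [hammingDist, Finset.card_eq_one, Finset.ext_iff, Finset.mem_filter,
    Finset.mem_univ, true_and, Finset.mem_singleton]

theorem hammingDist_add_ne_iff {a b : ι → Bool} {i : ι}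
    (hab : ∀ k, a k ≠ b k ↔ k = i) (c d : ι → Bool) :
    hammingDist a c + hammingDist b d ≠ hammingDist a d + hammingDist b c ↔ c i ≠ d i := by
  let ind : Bool → Bool → ℤ := fun x y => if x ≠ y then 1 else 0
  let δ : ι → ℤ := fun k => ind (a k) (c k) + ind (b k) (d k) - ind (a k) (d k) - ind (b k) (c k)
  have hsum : ((hammingDist a c + hammingDist b d : ℕ) : ℤ) -
      (hammingDist a d + hammingDist b c : ℕ) = ∑ k, δ k := by
    simp only [hammingDist, Finset.card_filter, δ, ind, Finset.sum_add_distrib,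
      Finset.sum_sub_distrib]
    push_cast
    ring
  have hoff : ∀ k, k ≠ i → δ k = 0 := fun k hk => by
    have : a k = b k := by simpa [hk] using hab k
    simp only [δ, this]
    ring
  rw [Finset.sum_eq_single i (fun k _ => hoff k) (by simp)] at hsum
  have hbi : b i = !a i := Bool.eq_not_iff.2 ((hab i).2 rfl).symm
  rw [Ne, ← @Nat.cast_inj ℤ, ← sub_eq_zero, hsum]
  simp only [δ, ind, hbi]
  cases a i <;> cases c i <;> cases d i <;> decide

variable [DecidableEq ι]

theorem hammingDist_update_of_ne {a : ∀ i, β i} {i : ι} {x : β i} (h : a i ≠ x) :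
    hammingDist a (Function.update a i x) = 1 :=
  hammingDist_eq_one_iff.2 ⟨i, fun k => by
    rcases eq_or_ne k i with rfl | hk
    · simpa using h
    · simp [hk]⟩

theorem hammingDist_update_add_one {a b : ∀ i, β i} {i : ι} (h : a i ≠ b i) :
    hammingDist (Function.update a i (b i)) b + 1 = hammingDist a b := by
  have hfilter : ({k | Function.update a i (b i) k ≠ b k} : Finset ι) =
      ({k | a k ≠ b k} : Finset ι).erase i := by
    ext k
    rcases eq_or_ne k i with rfl | hk <;> simp [Function.update_of_ne, *]
  rw [hammingDist, hfilter, Finset.card_erase_add_one (by simpa using h), hammingDist]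

end Hamming

section Hypercube

variable {d : ℕ}

theorem hypercubeGraph_adj {a b : Fin d → Bool} :
    (hypercubeGraph d).Adj a b ↔ hammingDist a b = 1 :=
  Iff.rfl

theorem hammingDist_le_length {a b : Fin d → Bool} (p : (hypercubeGraph d).Walk a b) :
    hammingDist a b ≤ p.length := by
  induction p with
  | nil => simp
  | @cons x y z hxy p ih =>
    rw [hypercubeGraph_adj] at hxy
    have := hammingDist_triangle x y z
    rw [SimpleGraph.Walk.length_cons]
    omega

theorem exists_walk_length_eq_hammingDist (a b : Fin d → Bool) :
    ∃ p : (hypercubeGraph d).Walk a b, p.length = hammingDist a b := by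
  induction hn : hammingDist a b generalizing a with
  | zero =>
    obtain rfl := hammingDist_eq_zero.1 hn
    exact ⟨.nil, rfl⟩
  | succ n ih =>
    have hab : a ≠ b := hammingDist_ne_zero.1 (by omega)
    obtain ⟨i, hi⟩ := Function.ne_iff.1 hab
    have hstep := hammingDist_update_add_one hi
    obtain ⟨p, hp⟩ := ih (Function.update a i (b i)) (by omega)
    exact ⟨.cons (hypercubeGraph_adj.2 (hammingDist_update_of_ne hi)) p, by simp [hp]⟩

theorem hypercubeGraph_dist (a b : Fin d → Bool) :
    (hypercubeGraph d).dist a b = hammingDist a b := by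
  obtain ⟨p, hp⟩ := exists_walk_length_eq_hammingDist a b
  obtain ⟨q, hq⟩ := SimpleGraph.Reachable.exists_walk_length_eq_dist ⟨p⟩
  exact le_antisymm (hp ▸ SimpleGraph.dist_le p) (hq ▸ hammingDist_le_length q)

end Hypercube

theorem dwRel_mk_iff {V : Type} {G : SimpleGraph V} {x y u v : V} :
    DWRel G s(x, y) s(u, v) ↔ G.dist x u + G.dist y v ≠ G.dist x v + G.dist y u := by
  refine ⟨?_, fun h => ⟨x, y, u, v, rfl, rfl, h⟩⟩
  rintro ⟨x', y', u', v', he, hf, h⟩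
  rcases Sym2.eq_iff.1 he with ⟨rfl, rfl⟩ | ⟨rfl, rfl⟩ <;>
    rcases Sym2.eq_iff.1 hf with ⟨rfl, rfl⟩ | ⟨rfl, rfl⟩ <;>
    omega

def diffCoords {V ι : Type*} (φ : V → ι → Bool) : Sym2 V → Set ι :=
  Sym2.lift ⟨fun x y => {i | φ x i ≠ φ y i}, fun x y => by simp only [ne_comm]⟩

section HammingEmbedding

variable {V : Type} {G : SimpleGraph V} {ι : Type*} [Fintype ι] {φ : V → ι → Bool}

theorem exists_diffCoords_eq_singleton (hφ : ∀ v w, hammingDist (φ v) (φ w) = G.dist v w)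
    {x y : V} (hxy : G.Adj x y) : ∃ i, diffCoords φ s(x, y) = {i} := by
  obtain ⟨i, hi⟩ := hammingDist_eq_one_iff.1 ((hφ x y).trans (G.dist_eq_one_iff_adj.2 hxy))
  exact ⟨i, Set.ext hi⟩

theorem dwRel_iff_diffCoords_eq (hφ : ∀ v w, hammingDist (φ v) (φ w) = G.dist v w)
    {e f : Sym2 V} (he : e ∈ G.edgeSet) (hf : f ∈ G.edgeSet) :
    DWRel G e f ↔ diffCoords φ e = diffCoords φ f := by
  induction e using Sym2.ind with | _ x y => ?_
  induction f using Sym2.ind with | _ u v => ?_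
  obtain ⟨i, hxy⟩ : ∃ i, diffCoords φ s(x, y) = {i} := exists_diffCoords_eq_singleton hφ he
  obtain ⟨j, huv⟩ : ∃ j, diffCoords φ s(u, v) = {j} := exists_diffCoords_eq_singleton hφ hf
  have hi : φ u i ≠ φ v i ↔ i = j := Set.ext_iff.1 huv i
  rw [dwRel_mk_iff, ← hφ, ← hφ, ← hφ, ← hφ, hammingDist_add_ne_iff (Set.ext_iff.1 hxy), hi,
    hxy, huv, Set.singleton_eq_singleton_iff]

end HammingEmbedding

/-- In a partial cube, the Djoković–Winkler relation `Θ` is an equivalence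
relation on the edge set: it is reflexive, symmetric and transitive on the
edges of the graph. -/
theorem dwRel_equivalence_of_isPartialCube {V : Type} (G : SimpleGraph V)
    (hG : IsPartialCube G) :
    (∀ e ∈ G.edgeSet, DWRel G e e) ∧
    (∀ e ∈ G.edgeSet, ∀ f ∈ G.edgeSet, DWRel G e f → DWRel G f e) ∧
    (∀ e ∈ G.edgeSet, ∀ f ∈ G.edgeSet, ∀ g ∈ G.edgeSet,
      DWRel G e f → DWRel G f g → DWRel G e g) := by
  obtain ⟨-, d, φ, -, hφ⟩ := hG
  have hΘ : ∀ e ∈ G.edgeSet, ∀ f ∈ G.edgeSet, DWRel G e f ↔ diffCoords φ e = diffCoords φ f :=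
    fun e he f hf => dwRel_iff_diffCoords_eq (fun v w => by rw [← hφ, hypercubeGraph_dist]) he hf
  refine ⟨fun e he => (hΘ e he e he).2 rfl, fun e he f hf hef => ?_,
    fun e he f hf g hg hef hfg => ?_⟩
  · exact (hΘ f hf e he).2 ((hΘ e he f hf).1 hef).symm
  · exact (hΘ e he g hg).2 (((hΘ e he f hf).1 hef).trans ((hΘ f hf g hg).1 hfg))
end
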